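/- (Local one-step evaluation.) Let π_L be the policy equal to the behavior policy π_b at all times except time L, where it follows a memoryless evaluation policy π_e(a|z). If P^b(Z_L | a_L, Z_{L-1}) and P^b(U_L | a_L, Z_{L-1}) are invertible square matrices for every action a_L, then P^{π_L}(r_L) = Σ_{z_L, a_L} π_e(a_L | z_L) · P^b(r_L, z_L | a_L, Z_{L-1}) · W_L(a_L), where W_L(a_L) = P^b(Z_L | a_L, Z_{L-1})^{-1}·P^b(Z_L) and P^b(r_L, z_L | a_L, Z_{L-1}) is the row vector with entries P^b(r_L, z_L | a_L, z_{L-1}). -/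

import Mathlib

/-!
Fix an action `a` and write `N_a = P^b(U_L | a, Z_{L-1})`, `C = P^b(Z_L | U_L)`. Conditioning
on `u_L` (law of total probability) and using the two conditional independences gives
`P^b(Z_L | a, Z_{L-1}) = C N_a`, `P^b(Z_L) = C P^b(U_L)` and
`P^b(r, z | a, Z_{L-1}) = P^b(r, z | a, U_L) N_a`. If `N_a B = 1`, then `C = (C N_a) B`, so
`W_L(a) = (C N_a)⁻¹ C P^b(U_L) = B P^b(U_L)` and the row vector times `W_L(a)` collapses to
`Σ_u P^b(r, z | a, u) P^b(u)`.
-/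

open Finset Matrix
open scoped Classical

noncomputable def Pr {Ω : Type*} [Fintype Ω] (μ : Ω → ℝ) (E : Ω → Prop) : ℝ :=
  ∑ ω, if E ω then μ ω else 0

noncomputable def cPr {Ω : Type*} [Fintype Ω] (μ : Ω → ℝ) (E F : Ω → Prop) : ℝ :=
  Pr μ (fun ω => E ω ∧ F ω) / Pr μ F

theorem Matrix.vecMul_dotProduct_inv_mul_mulVec {R : Type*} [CommRing R]
    {m n : Type*} [Fintype m] [Fintype n] [DecidableEq m]
    {N : Matrix n m R} {B : Matrix m n R} (hNB : N * B = 1) {C : Matrix m n R}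
    (hCN : IsUnit (C * N).det) (q h : n → R) :
    (q ᵥ* N) ⬝ᵥ ((C * N)⁻¹ *ᵥ (C *ᵥ h)) = q ⬝ᵥ h := by
  have hB : (C * N)⁻¹ * C = B := by
    calc (C * N)⁻¹ * C = (C * N)⁻¹ * (C * N) * B := by
          rw [Matrix.mul_assoc (C * N)⁻¹, Matrix.mul_assoc C, hNB, Matrix.mul_one]
      _ = B := by rw [nonsing_inv_mul _ hCN, Matrix.one_mul]
  rw [mulVec_mulVec, hB, dotProduct_mulVec, vecMul_vecMul, hNB, vecMul_one]

section FiniteProbability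

variable {Ω : Type*} [Fintype Ω] {μ : Ω → ℝ}

theorem Pr_congr {E F : Ω → Prop} (h : ∀ ω, E ω ↔ F ω) : Pr μ E = Pr μ F := by
  simp only [Pr, h]

theorem cPr_congr {E E' F F' : Ω → Prop} (hE : ∀ ω, E ω ↔ E' ω) (hF : ∀ ω, F ω ↔ F' ω) :
    cPr μ E F = cPr μ E' F' := by
  rw [cPr, cPr, Pr_congr hF, Pr_congr fun ω => and_congr (hE ω) (hF ω)]

theorem Pr_nonneg (hμ : ∀ ω, 0 ≤ μ ω) (E : Ω → Prop) : 0 ≤ Pr μ E :=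
  sum_nonneg fun ω _ => by split_ifs <;> simp [hμ ω]

theorem Pr_and_le (hμ : ∀ ω, 0 ≤ μ ω) (E F : Ω → Prop) :
    Pr μ (fun ω => E ω ∧ F ω) ≤ Pr μ F :=
  sum_le_sum fun ω _ => by split_ifs <;> simp_all

theorem cPr_mul_Pr (hμ : ∀ ω, 0 ≤ μ ω) (E F : Ω → Prop) :
    cPr μ E F * Pr μ F = Pr μ (fun ω => E ω ∧ F ω) := by
  rcases eq_or_ne (Pr μ F) 0 with hF | hF
  · -- `cPr μ E F = 0` by division by zero, and `Pr μ (E ∧ F)` vanishes by monotonicity.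
    rw [hF, mul_zero]
    exact le_antisymm (Pr_nonneg hμ _) (hF ▸ Pr_and_le hμ E F)
  · exact div_mul_cancel₀ _ hF

theorem Pr_eq_sum_Pr_and {β : Type*} (g : Ω → β) {s : Finset β} (hs : ∀ ω, g ω ∈ s)
    (E : Ω → Prop) : Pr μ E = ∑ x ∈ s, Pr μ (fun ω => g ω = x ∧ E ω) := by
  simp only [Pr]
  rw [sum_comm]
  refine sum_congr rfl fun ω _ => ?_
  by_cases hE : E ω <;> simp [hE, hs ω]

theorem cPr_eq_sum_cPr_and {β : Type*} (g : Ω → β) {s : Finset β} (hs : ∀ ω, g ω ∈ s)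
    (E F : Ω → Prop) : cPr μ E F = ∑ x ∈ s, cPr μ (fun ω => g ω = x ∧ E ω) F := by
  simp only [cPr, ← sum_div, Pr_eq_sum_Pr_and g hs (fun ω => E ω ∧ F ω), and_assoc]

theorem cPr_eq_cPr_of_forall_and {β : Type*} (g : Ω → β) {E F F' : Ω → Prop}
    (h : ∀ x, cPr μ (fun ω => g ω = x ∧ E ω) F = cPr μ (fun ω => g ω = x ∧ E ω) F') :
    cPr μ E F = cPr μ E F' := by
  have hrange : ∀ ω, g ω ∈ univ.image g := fun ω => mem_image_of_mem g (mem_univ ω)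
  rw [cPr_eq_sum_cPr_and g hrange, cPr_eq_sum_cPr_and g hrange E F']
  exact sum_congr rfl fun x _ => h x

theorem Pr_eq_sum_cPr_mul_Pr (hμ : ∀ ω, 0 ≤ μ ω) {β : Type*} [Fintype β] (g : Ω → β)
    (E : Ω → Prop) : Pr μ E = ∑ u, cPr μ E (fun ω => g ω = u) * Pr μ (fun ω => g ω = u) := by
  rw [Pr_eq_sum_Pr_and g (fun ω => mem_univ (g ω))]
  exact sum_congr rfl fun u _ => by rw [cPr_mul_Pr hμ]; exact Pr_congr fun ω => and_comm

theorem cPr_eq_sum_mul_cPr (hμ : ∀ ω, 0 ≤ μ ω) {β : Type*} [Fintype β] (g : Ω → β)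
    {E F : Ω → Prop} {c : β → ℝ} (hc : ∀ u, cPr μ E (fun ω => g ω = u ∧ F ω) = c u) :
    cPr μ E F = ∑ u, c u * cPr μ (fun ω => g ω = u) F := by
  have hjoint : ∀ u,
      Pr μ (fun ω => g ω = u ∧ E ω ∧ F ω) = c u * Pr μ (fun ω => g ω = u ∧ F ω) := fun u => by
    rw [← hc u, cPr_mul_Pr hμ]
    exact Pr_congr fun ω => by tauto
  simp only [cPr, Pr_eq_sum_Pr_and g (fun ω => mem_univ (g ω)) (fun ω => E ω ∧ F ω), hjoint,
    sum_div, mul_div_assoc]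

end FiniteProbability

theorem local_one_step_evaluation_general
    {Ω : Type*} [Fintype Ω] (μ : Ω → ℝ)
    {Uty Zty Aty : Type*} [Fintype Uty] [Fintype Zty] [Fintype Aty] [DecidableEq Zty]
    (uL : Ω → Uty) (zL zLm1 : Ω → Zty) (aL : Ω → Aty) (rL : Ω → ℝ)
    (hμ : ∀ ω, 0 ≤ μ ω)
    (πe : Zty → Aty → ℝ)
    -- z_{L-1} ⊥ (r_L, z_L) | (a_L, u_L)
    (hCI1 : ∀ (ρ : ℝ) (zv zp : Zty) (av : Aty) (uv : Uty),
      cPr μ (fun ω => rL ω = ρ ∧ zL ω = zv)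
          (fun ω => aL ω = av ∧ uL ω = uv ∧ zLm1 ω = zp) =
        cPr μ (fun ω => rL ω = ρ ∧ zL ω = zv) (fun ω => aL ω = av ∧ uL ω = uv))
    -- z_L ⊥ a_L | u_L
    (hCI2 : ∀ (zv : Zty) (av : Aty) (uv : Uty),
      cPr μ (fun ω => zL ω = zv) (fun ω => aL ω = av ∧ uL ω = uv) =
        cPr μ (fun ω => zL ω = zv) (fun ω => uL ω = uv))
    -- invertibility of P^b(Z_L | a_L, Z_{L-1}) for every a_L
    (hinvZ : ∀ av : Aty, IsUnit (Matrix.of fun (zc zp : Zty) =>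
      cPr μ (fun ω => zL ω = zc) (fun ω => aL ω = av ∧ zLm1 ω = zp)).det)
    -- invertibility of P^b(U_L | a_L, Z_{L-1}) for every a_L
    (hinvU : ∀ av : Aty, ∃ B : Matrix Zty Uty ℝ,
      (Matrix.of fun (uv : Uty) (zp : Zty) =>
        cPr μ (fun ω => uL ω = uv) (fun ω => aL ω = av ∧ zLm1 ω = zp)) * B = 1 ∧
      B * (Matrix.of fun (uv : Uty) (zp : Zty) =>
        cPr μ (fun ω => uL ω = uv) (fun ω => aL ω = av ∧ zLm1 ω = zp)) = 1)
    (ρ : ℝ) :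
    -- P^{π_L}(r_L)
    (∑ zv : Zty, ∑ av : Aty, ∑ uv : Uty,
        πe zv av *
          cPr μ (fun ω => rL ω = ρ ∧ zL ω = zv) (fun ω => aL ω = av ∧ uL ω = uv) *
          Pr μ (fun ω => uL ω = uv)) =
      ∑ zv : Zty, ∑ av : Aty,
        πe zv av *
          ((fun zp : Zty =>
              cPr μ (fun ω => rL ω = ρ ∧ zL ω = zv)
                (fun ω => aL ω = av ∧ zLm1 ω = zp)) ⬝ᵥ
            ((Matrix.of fun (zc zp : Zty) =>
                cPr μ (fun ω => zL ω = zc) (fun ω => aL ω = av ∧ zLm1 ω = zp))⁻¹ *ᵥ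
              fun zc : Zty => Pr μ (fun ω => zL ω = zc))) := by
  set C : Matrix Zty Uty ℝ :=
    Matrix.of fun zc uv => cPr μ (fun ω => zL ω = zc) (fun ω => uL ω = uv)
  have hZ : (fun zc => Pr μ (fun ω => zL ω = zc)) = C *ᵥ fun uv => Pr μ (fun ω => uL ω = uv) :=
    funext fun zc => Pr_eq_sum_cPr_mul_Pr hμ uL _
  refine sum_congr rfl fun zv _ => sum_congr rfl fun av _ => ?_
  obtain ⟨B, hNB, -⟩ := hinvU av
  set N : Matrix Uty Zty ℝ :=
    Matrix.of fun uv zp => cPr μ (fun ω => uL ω = uv) (fun ω => aL ω = av ∧ zLm1 ω = zp)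
  have hcond : ∀ {E : Ω → Prop} uv zp,
      cPr μ E (fun ω => uL ω = uv ∧ aL ω = av ∧ zLm1 ω = zp) =
        cPr μ E (fun ω => aL ω = av ∧ uL ω = uv ∧ zLm1 ω = zp) :=
    fun _ _ => cPr_congr (fun _ => Iff.rfl) fun _ => and_left_comm
  have hM : (Matrix.of fun zc zp =>
      cPr μ (fun ω => zL ω = zc) (fun ω => aL ω = av ∧ zLm1 ω = zp)) = C * N := by
    ext zc zp
    refine cPr_eq_sum_mul_cPr hμ uL fun uv => (hcond uv zp).trans ?_
    exact (cPr_eq_cPr_of_forall_and rL fun ρ => hCI1 ρ zc zp av uv).trans (hCI2 zc av uv)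
  have hrow : (fun zp => cPr μ (fun ω => rL ω = ρ ∧ zL ω = zv)
      (fun ω => aL ω = av ∧ zLm1 ω = zp)) =
        (fun uv => cPr μ (fun ω => rL ω = ρ ∧ zL ω = zv) (fun ω => aL ω = av ∧ uL ω = uv)) ᵥ* N :=
    funext fun zp => cPr_eq_sum_mul_cPr hμ uL fun uv => (hcond uv zp).trans (hCI1 ρ zv zp av uv)
  rw [hrow, hZ, hM, vecMul_dotProduct_inv_mul_mulVec hNB (hM ▸ hinvZ av), dotProduct, mul_sum]
  simp only [mul_assoc]

/-- Proposition 1, local one-step evaluation: with `π_L` following the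
behavior policy up to time `L-1` and the memoryless evaluation policy `π_e(a|z)` at time
`L`, so that `P^{π_L}(r_L) = Σ_{z_L,a_L,u_L} π_e(a_L|z_L) P^b(r_L, z_L|a_L, u_L) P^b(u_L)`,
if `P^b(Z_L|a_L,Z_{L-1})` and `P^b(U_L|a_L,Z_{L-1})` are invertible for every `a_L` then
`P^{π_L}(r_L) = Σ_{z_L,a_L} π_e(a_L|z_L) · P^b(r_L, z_L|a_L, Z_{L-1}) · W_L(a_L)` where
`W_L(a_L) = P^b(Z_L|a_L,Z_{L-1})⁻¹ P^b(Z_L)`. Here `|Z| = |U|` (both value sets indexed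
by the same finite type would be `Fin n`; we index `u` by `Uty` and `z` by `Zty` and
express invertibility of the rectangular matrix by a two-sided inverse). -/
theorem local_one_step_evaluation
    {Ω : Type*} [Fintype Ω] (μ : Ω → ℝ)
    {Uty Zty Aty : Type*} [Fintype Uty] [Fintype Zty] [Fintype Aty] [DecidableEq Zty]
    (uL : Ω → Uty) (zL zLm1 : Ω → Zty) (aL : Ω → Aty) (rL : Ω → ℝ)
    (hμ : ∀ ω, 0 ≤ μ ω) (hsum : ∑ ω, μ ω = 1)
    (hcard : Fintype.card Zty = Fintype.card Uty)
    (πe : Zty → Aty → ℝ)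
    -- positivity of conditioning events
    (hposu : ∀ (av : Aty) (uv : Uty), 0 < Pr μ (fun ω => aL ω = av ∧ uL ω = uv))
    (hposz : ∀ (av : Aty) (zp : Zty), 0 < Pr μ (fun ω => aL ω = av ∧ zLm1 ω = zp))
    (hposU : ∀ uv : Uty, 0 < Pr μ (fun ω => uL ω = uv))
    -- z_{L-1} ⊥ (r_L, z_L) | (a_L, u_L)
    (hCI1 : ∀ (ρ : ℝ) (zv zp : Zty) (av : Aty) (uv : Uty),
      cPr μ (fun ω => rL ω = ρ ∧ zL ω = zv)
          (fun ω => aL ω = av ∧ uL ω = uv ∧ zLm1 ω = zp) =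
        cPr μ (fun ω => rL ω = ρ ∧ zL ω = zv) (fun ω => aL ω = av ∧ uL ω = uv))
    -- z_L ⊥ a_L | u_L
    (hCI2 : ∀ (zv : Zty) (av : Aty) (uv : Uty),
      cPr μ (fun ω => zL ω = zv) (fun ω => aL ω = av ∧ uL ω = uv) =
        cPr μ (fun ω => zL ω = zv) (fun ω => uL ω = uv))
    -- invertibility of P^b(Z_L | a_L, Z_{L-1}) for every a_L
    (hinvZ : ∀ av : Aty, IsUnit (Matrix.of fun (zc zp : Zty) =>
      cPr μ (fun ω => zL ω = zc) (fun ω => aL ω = av ∧ zLm1 ω = zp)).det)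
    -- invertibility of P^b(U_L | a_L, Z_{L-1}) for every a_L
    (hinvU : ∀ av : Aty, ∃ B : Matrix Zty Uty ℝ,
      (Matrix.of fun (uv : Uty) (zp : Zty) =>
        cPr μ (fun ω => uL ω = uv) (fun ω => aL ω = av ∧ zLm1 ω = zp)) * B = 1 ∧
      B * (Matrix.of fun (uv : Uty) (zp : Zty) =>
        cPr μ (fun ω => uL ω = uv) (fun ω => aL ω = av ∧ zLm1 ω = zp)) = 1)
    (ρ : ℝ) :
    -- P^{π_L}(r_L)
    (∑ zv : Zty, ∑ av : Aty, ∑ uv : Uty,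
        πe zv av *
          cPr μ (fun ω => rL ω = ρ ∧ zL ω = zv) (fun ω => aL ω = av ∧ uL ω = uv) *
          Pr μ (fun ω => uL ω = uv)) =
      ∑ zv : Zty, ∑ av : Aty,
        πe zv av *
          ((fun zp : Zty =>
              cPr μ (fun ω => rL ω = ρ ∧ zL ω = zv)
                (fun ω => aL ω = av ∧ zLm1 ω = zp)) ⬝ᵥ
            ((Matrix.of fun (zc zp : Zty) =>
                cPr μ (fun ω => zL ω = zc) (fun ω => aL ω = av ∧ zLm1 ω = zp))⁻¹ *ᵥ
              fun zc : Zty => Pr μ (fun ω => zL ω = zc))) :=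
  local_one_step_evaluation_general μ uL zL zLm1 aL rL hμ πe hCI1 hCI2 hinvZ hinvU ρ
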